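/- Under the stated setup, if |λ₁| < |λ₂| then lim_{h→∞} CD⁻(h)/λ₂ʰ = α·D₂; equivalently, the cross-codifference CD(X₁(t),X₂(t−h)) is asymptotically α·D₂·λ₂ʰ as h → ∞. -/

import Mathlib

open MeasureTheory Filter Topology

/-- The signed power `x^⟨p⟩ = |x|^p · sign x`. -/
noncomputable def spow (x p : ℝ) : ℝ := |x| ^ p * Real.sign x

/-- The unit sphere `S₂ ⊆ ℝ²`. -/
abbrev Sphere2 : Type := {s : ℝ × ℝ // s.1 ^ 2 + s.2 ^ 2 = 1}

noncomputable def A1 (a1 a2 a3 a4 l1 l2 : ℝ) (j : ℕ) (s : Sphere2) : ℝ :=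
  (l2 * l1 ^ j * s.1.1 - l1 ^ j * a1 * s.1.1 - l1 ^ j * a2 * s.1.2) / (l2 - l1)

noncomputable def B1 (a1 a2 a3 a4 l1 l2 : ℝ) (j : ℕ) (s : Sphere2) : ℝ :=
  (-(l1 * l2 ^ j * s.1.1) + l2 ^ j * a1 * s.1.1 + l2 ^ j * a2 * s.1.2) / (l2 - l1)

noncomputable def C1 (a1 a2 a3 a4 l1 l2 : ℝ) (j : ℕ) (s : Sphere2) : ℝ :=
  (l1 ^ j * (-(a3 * s.1.1) + l2 * s.1.2 - a4 * s.1.2)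
    + l2 ^ j * (a3 * s.1.1 - l1 * s.1.2 + a4 * s.1.2)) / (l2 - l1)

/-- The cross-codifference `CD(X₁(t), X₂(t-h))` of the bidimensional α-stable AR(1) model. -/
noncomputable def CDneg (Γ : Measure Sphere2) (α a1 a2 a3 a4 l1 l2 : ℝ) (h : ℕ) : ℝ :=
  ∑' j : ℕ, ∫ s,
    (|l1 ^ h * A1 a1 a2 a3 a4 l1 l2 j s + l2 ^ h * B1 a1 a2 a3 a4 l1 l2 j s| ^ α
      + |C1 a1 a2 a3 a4 l1 l2 j s| ^ α
      - |C1 a1 a2 a3 a4 l1 l2 j s - (l1 ^ h * A1 a1 a2 a3 a4 l1 l2 j s + l2 ^ h * B1 a1 a2 a3 a4 l1 l2 j s)| ^ α) ∂Γ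

/-- The cross-covariation `CV(X₁(t), X₂(t-h))` of the bidimensional α-stable AR(1) model. -/
noncomputable def CVneg (Γ : Measure Sphere2) (α a1 a2 a3 a4 l1 l2 : ℝ) (h : ℕ) : ℝ :=
  ∑' j : ℕ, ∫ s,
    spow (C1 a1 a2 a3 a4 l1 l2 j s) (α - 1) * (l1 ^ h * A1 a1 a2 a3 a4 l1 l2 j s + l2 ^ h * B1 a1 a2 a3 a4 l1 l2 j s) ∂Γ

noncomputable def D1 (Γ : Measure Sphere2) (α a1 a2 a3 a4 l1 l2 : ℝ) : ℝ :=
  ∑' j : ℕ, ∫ s, A1 a1 a2 a3 a4 l1 l2 j s * spow (C1 a1 a2 a3 a4 l1 l2 j s) (α - 1) ∂Γ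

noncomputable def D2 (Γ : Measure Sphere2) (α a1 a2 a3 a4 l1 l2 : ℝ) : ℝ :=
  ∑' j : ℕ, ∫ s, B1 a1 a2 a3 a4 l1 l2 j s * spow (C1 a1 a2 a3 a4 l1 l2 j s) (α - 1) ∂Γ


lemma abs_spow_le (x q : ℝ) : |spow x q| ≤ |x| ^ q := by
  unfold spow
  rw [abs_mul, abs_of_nonneg (Real.rpow_nonneg (abs_nonneg x) q)]
  have h : |Real.sign x| ≤ 1 := by
    rcases Real.sign_apply_eq x with h | h | h <;> rw [h] <;> norm_num
  calc |x| ^ q * |Real.sign x| ≤ |x| ^ q * 1 :=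
        mul_le_mul_of_nonneg_left h (Real.rpow_nonneg (abs_nonneg x) q)
    _ = |x| ^ q := mul_one _

lemma abs_rpow_two_mul (a x : ℝ) : |x| ^ (a - 2) * x = spow x (a - 1) := by
  have e : a - 2 + 1 = a - 1 := by ring
  unfold spow
  rcases lt_trichotomy x 0 with h | h | h
  · have hx : (-x) ≠ 0 := by linarith
    rw [abs_of_neg h, Real.sign_of_neg h]
    calc (-x) ^ (a - 2) * x = -((-x) ^ (a - 2) * (-x)) := by ring
      _ = -((-x) ^ (a - 2 + 1)) := by rw [Real.rpow_add_one hx]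
      _ = (-x) ^ (a - 1) * (-1) := by rw [e]; ring
  · simp [h, Real.sign_zero]
  · have hx : x ≠ 0 := ne_of_gt h
    rw [abs_of_pos h, Real.sign_of_pos h]
    calc x ^ (a - 2) * x = x ^ (a - 2 + 1) := by rw [Real.rpow_add_one hx]
      _ = x ^ (a - 1) * 1 := by rw [e]; ring

lemma hasDerivAt_spow {a : ℝ} (ha : 1 < a) (x : ℝ) :
    HasDerivAt (fun t : ℝ => |t| ^ a) (a * spow x (a - 1)) x := by
  have h := hasDerivAt_abs_rpow x ha
  rwa [mul_assoc, abs_rpow_two_mul] at h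

lemma abs_rpow_sub_abs_rpow_le {a R : ℝ} (ha : 1 < a) {x y : ℝ} (hx : |x| ≤ R) (hy : |y| ≤ R) :
    |(|x| ^ a - |y| ^ a)| ≤ a * R ^ (a - 1) * |x - y| := by
  have key := Convex.norm_image_sub_le_of_norm_hasDerivWithin_le
    (f := fun t : ℝ => |t| ^ a) (f' := fun t => a * spow t (a - 1)) (s := Set.Icc (-R) R)
    (fun t _ => (hasDerivAt_spow ha t).hasDerivWithinAt)
    (C := a * R ^ (a - 1)) ?_ (convex_Icc _ _) (y := x) (x := y)
    (Set.mem_Icc.mpr (abs_le.mp hy)) (Set.mem_Icc.mpr (abs_le.mp hx))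
  · simpa [Real.norm_eq_abs, abs_sub_comm] using key
  · intro t ht
    rw [Real.norm_eq_abs, abs_mul, abs_of_pos (by linarith : (0:ℝ) < a)]
    have h1 : |spow t (a - 1)| ≤ |t| ^ (a - 1) := abs_spow_le t _
    have h2 : |t| ^ (a - 1) ≤ R ^ (a - 1) := by
      apply Real.rpow_le_rpow (abs_nonneg t) _ (by linarith)
      rw [abs_le]; exact ⟨ht.1, ht.2⟩
    nlinarith [abs_nonneg (spow t (a-1))]

lemma pow_rpow_comm {x : ℝ} (hx : 0 ≤ x) (j : ℕ) (q : ℝ) : (x ^ j) ^ q = (x ^ q) ^ j := by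
  rw [← Real.rpow_natCast x j, ← Real.rpow_mul hx, mul_comm (j : ℝ) q, Real.rpow_mul hx,
    Real.rpow_natCast]

lemma eps_abs_le {r1 r2 : ℝ} (hr : |r1| < |r2|) (A B : ℝ) (h : ℕ) :
    |r1 ^ h * A + r2 ^ h * B| ≤ |r2| ^ h * (|A| + |B|) := by
  calc |r1 ^ h * A + r2 ^ h * B| ≤ |r1 ^ h * A| + |r2 ^ h * B| := abs_add_le _ _
    _ = |r1| ^ h * |A| + |r2| ^ h * |B| := by rw [abs_mul, abs_mul, abs_pow, abs_pow]
    _ ≤ |r2| ^ h * |A| + |r2| ^ h * |B| := by gcongr <;> exact hr.le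
    _ = |r2| ^ h * (|A| + |B|) := by ring

lemma key_bound {a r1 r2 : ℝ} (ha : 1 < a) (h2 : |r2| < 1) (hr : |r1| < |r2|) (A B C : ℝ)
    (h : ℕ) :
    |(|r1 ^ h * A + r2 ^ h * B| ^ a + |C| ^ a - |C - (r1 ^ h * A + r2 ^ h * B)| ^ a) / r2 ^ h|
      ≤ (|A| + |B|) ^ a + a * (|C| + (|A| + |B|)) ^ (a - 1) * (|A| + |B|) := by
  have hr2 : (0:ℝ) < |r2| := lt_of_le_of_lt (abs_nonneg r1) hr
  have hr2h : (0:ℝ) < |r2| ^ h := pow_pos hr2 h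
  set ε := r1 ^ h * A + r2 ^ h * B with hεdef
  set M := |A| + |B| with hM
  have hM0 : (0:ℝ) ≤ M := by positivity
  have hεle : |ε| ≤ |r2| ^ h * M := eps_abs_le hr A B h
  have hple : |r2| ^ h ≤ 1 := pow_le_one₀ (abs_nonneg r2) h2.le
  have hεM : |ε| ≤ M := le_trans hεle (by nlinarith)
  rw [abs_div, abs_pow, div_le_iff₀ hr2h]
  have t1 : |ε| ^ a ≤ M ^ a * |r2| ^ h := by
    calc |ε| ^ a ≤ (|r2| ^ h * M) ^ a := Real.rpow_le_rpow (abs_nonneg _) hεle (by linarith)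
      _ = (|r2| ^ h) ^ a * M ^ a := Real.mul_rpow (le_of_lt hr2h) hM0
      _ ≤ (|r2| ^ h) ^ (1:ℝ) * M ^ a :=
          mul_le_mul_of_nonneg_right
            (Real.rpow_le_rpow_of_exponent_ge hr2h hple (by linarith))
            (Real.rpow_nonneg hM0 a)
      _ = M ^ a * |r2| ^ h := by rw [Real.rpow_one]; ring
  have t2 : |(|C| ^ a - |C - ε| ^ a)| ≤ a * (|C| + M) ^ (a - 1) * (|r2| ^ h * M) := by
    have hCR : |C| ≤ |C| + M := by linarith
    have hCεR : |C - ε| ≤ |C| + M := le_trans (abs_sub C ε) (by linarith [hεM])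
    have := abs_rpow_sub_abs_rpow_le ha hCR hCεR
    have he : |C - (C - ε)| = |ε| := by congr 1; ring
    rw [he] at this
    calc |(|C| ^ a - |C - ε| ^ a)| ≤ a * (|C| + M) ^ (a - 1) * |ε| := this
      _ ≤ a * (|C| + M) ^ (a - 1) * (|r2| ^ h * M) :=
          mul_le_mul_of_nonneg_left hεle (by positivity)
  calc |(|ε| ^ a + |C| ^ a - |C - ε| ^ a)|
      ≤ |(|ε| ^ a)| + |(|C| ^ a - |C - ε| ^ a)| := by
        have : |ε| ^ a + |C| ^ a - |C - ε| ^ a = |ε| ^ a + (|C| ^ a - |C - ε| ^ a) := by ring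
        rw [this]; exact abs_add_le _ _
    _ ≤ M ^ a * |r2| ^ h + a * (|C| + M) ^ (a - 1) * (|r2| ^ h * M) := by
        rw [abs_of_nonneg (Real.rpow_nonneg (abs_nonneg ε) a)]
        exact add_le_add t1 t2
    _ = (M ^ a + a * (|C| + M) ^ (a - 1) * M) * |r2| ^ h := by ring

lemma key_tendsto {a r1 r2 : ℝ} (ha : 1 < a) (h2 : |r2| < 1) (hr : |r1| < |r2|) (A B C : ℝ) :
    Tendsto (fun h : ℕ =>
        (|r1 ^ h * A + r2 ^ h * B| ^ a + |C| ^ a - |C - (r1 ^ h * A + r2 ^ h * B)| ^ a) / r2 ^ h)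
      atTop (𝓝 (a * spow C (a - 1) * B)) := by
  have hr2 : (0:ℝ) < |r2| := lt_of_le_of_lt (abs_nonneg r1) hr
  have hr20 : r2 ≠ 0 := fun hc => by simp [hc] at hr2
  set ε : ℕ → ℝ := fun h => r1 ^ h * A + r2 ^ h * B with hεdef
  have t1 : Tendsto (fun h => ε h / r2 ^ h) atTop (𝓝 B) := by
    have h1 : Tendsto (fun h : ℕ => (r1 / r2) ^ h * A + B) atTop (𝓝 (0 * A + B)) :=
      ((tendsto_pow_atTop_nhds_zero_of_abs_lt_one
        (by rw [abs_div]; exact (div_lt_one hr2).mpr hr)).mul_const A).add_const B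
    rw [zero_mul, zero_add] at h1
    refine h1.congr fun h => ?_
    have hp : r2 ^ h ≠ 0 := pow_ne_zero h hr20
    rw [div_pow]
    simp only [hεdef]
    field_simp
  have t0 : Tendsto ε atTop (𝓝 0) := by
    have h3 := (tendsto_pow_atTop_nhds_zero_of_abs_lt_one h2).mul t1
    rw [zero_mul] at h3
    refine h3.congr fun h => ?_
    have hp : r2 ^ h ≠ 0 := pow_ne_zero h hr20
    field_simp
  have term1 : Tendsto (fun h => |ε h| ^ a / r2 ^ h) atTop (𝓝 0) := by
    have hgt : Tendsto (fun h : ℕ => (|r2| ^ (a - 1)) ^ h * (|A| + |B|) ^ a) atTop (𝓝 0) := by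
      have hlt1 : |(|r2| ^ (a - 1))| < 1 := by
        rw [abs_of_nonneg (Real.rpow_nonneg (abs_nonneg r2) _)]
        exact Real.rpow_lt_one (abs_nonneg r2) h2 (by linarith)
      simpa using (tendsto_pow_atTop_nhds_zero_of_abs_lt_one hlt1).mul_const ((|A| + |B|) ^ a)
    refine squeeze_zero_norm (fun h => ?_) hgt
    ·
      have hr2h : (0:ℝ) < |r2| ^ h := pow_pos hr2 h
      rw [Real.norm_eq_abs, abs_div, abs_pow,
        abs_of_nonneg (Real.rpow_nonneg (abs_nonneg _) _), div_le_iff₀ hr2h]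
      have hεle : |ε h| ≤ |r2| ^ h * (|A| + |B|) := eps_abs_le hr A B h
      have hsplit : |r2| ^ a = |r2| ^ (a - 1) * |r2| := by
        rw [← Real.rpow_add_one (ne_of_gt hr2)]; norm_num
      calc |ε h| ^ a ≤ (|r2| ^ h * (|A| + |B|)) ^ a :=
            Real.rpow_le_rpow (abs_nonneg _) hεle (by linarith)
        _ = (|r2| ^ h) ^ a * (|A| + |B|) ^ a :=
            Real.mul_rpow (le_of_lt hr2h) (by positivity)
        _ = (|r2| ^ a) ^ h * (|A| + |B|) ^ a := by rw [pow_rpow_comm (abs_nonneg r2)]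
        _ = (|r2| ^ (a - 1)) ^ h * (|A| + |B|) ^ a * |r2| ^ h := by rw [hsplit, mul_pow]; ring
  set d := a * spow C (a - 1) with hd
  set q : ℝ → ℝ := fun t => if t = 0 then d else (|C| ^ a - |C - t| ^ a) / t with hq
  have qcont : Tendsto q (𝓝 0) (𝓝 d) := by
    have houter : HasDerivAt (fun t : ℝ => |t| ^ a) (a * spow C (a - 1))
        ((fun t : ℝ => C - t) 0) := by
      simpa using hasDerivAt_spow ha C
    have hinner : HasDerivAt (fun t : ℝ => C - t) (-1) 0 := (hasDerivAt_id (0:ℝ)).const_sub C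
    have h1 : HasDerivAt (fun t : ℝ => |C - t| ^ a) ((a * spow C (a - 1)) * (-1)) 0 :=
      houter.comp 0 hinner
    have hder : HasDerivAt (fun t : ℝ => |C| ^ a - |C - t| ^ a) d 0 := by
      have := (hasDerivAt_const (0:ℝ) (|C| ^ a)).sub h1
      have e : (0 - a * spow C (a - 1) * -1) = d := by rw [hd]; ring
      rw [e] at this
      exact this
    have hslope := hasDerivAt_iff_tendsto_slope.mp hder
    rw [← nhdsNE_sup_pure (0:ℝ), Filter.tendsto_sup]
    constructor
    · refine hslope.congr' ?_
      filter_upwards [self_mem_nhdsWithin] with t ht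
      have ht0 : t ≠ 0 := ht
      rw [slope_def_field, hq]
      simp only [if_neg ht0, sub_zero, sub_self]
    · have hq0 : q 0 = d := if_pos rfl
      rw [← hq0]
      exact tendsto_pure_nhds q 0
  have key2 : ∀ h : ℕ, (|C| ^ a - |C - ε h| ^ a) / r2 ^ h = q (ε h) * (ε h / r2 ^ h) := by
    intro h
    have hp : r2 ^ h ≠ 0 := pow_ne_zero h hr20
    rcases eq_or_ne (ε h) 0 with h0 | h0
    · rw [h0, hq]; simp
    · rw [hq]; simp only [if_neg h0]; field_simp
  have term2 : Tendsto (fun h => (|C| ^ a - |C - ε h| ^ a) / r2 ^ h) atTop (𝓝 (d * B)) :=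
    Tendsto.congr (fun h => (key2 h).symm) ((qcont.comp t0).mul t1)
  have hsum := term1.add term2
  rw [zero_add] at hsum
  refine hsum.congr fun h => ?_
  have hp : r2 ^ h ≠ 0 := pow_ne_zero h hr20
  field_simp
  ring

lemma bound_mono {a : ℝ} (ha : 1 < a) {A B C m3 m ρ : ℝ} (hρ : 0 < ρ) (j : ℕ)
    (hm : |A| + |B| ≤ m * ρ ^ j) (hc : |C| ≤ m3 * ρ ^ j) (hm30 : 0 ≤ m3) :
    (|A| + |B|) ^ a + a * (|C| + (|A| + |B|)) ^ (a - 1) * (|A| + |B|)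
      ≤ (m ^ a + a * (m3 + m) ^ (a - 1) * m) * (ρ ^ a) ^ j := by
  have hρj : (0:ℝ) < ρ ^ j := pow_pos hρ j
  have hm0 : (0:ℝ) ≤ m := by nlinarith [abs_nonneg A, abs_nonneg B]
  have h1 : (|A| + |B|) ^ a ≤ m ^ a * (ρ ^ a) ^ j := by
    calc (|A| + |B|) ^ a ≤ (m * ρ ^ j) ^ a :=
          Real.rpow_le_rpow (by positivity) hm (by linarith)
      _ = m ^ a * (ρ ^ j) ^ a := Real.mul_rpow hm0 hρj.le
      _ = m ^ a * (ρ ^ a) ^ j := by rw [pow_rpow_comm hρ.le]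
  have hsum : |C| + (|A| + |B|) ≤ (m3 + m) * ρ ^ j := by nlinarith
  have e1 : ((m3 + m) * ρ ^ j) ^ (a - 1) = (m3 + m) ^ (a - 1) * (ρ ^ (a - 1)) ^ j := by
    rw [Real.mul_rpow (by linarith) hρj.le, pow_rpow_comm hρ.le]
  have h3 : (|C| + (|A| + |B|)) ^ (a - 1) ≤ (m3 + m) ^ (a - 1) * (ρ ^ (a - 1)) ^ j := by
    rw [← e1]
    exact Real.rpow_le_rpow (by positivity) hsum (by linarith)
  have h2 : a * (|C| + (|A| + |B|)) ^ (a - 1) * (|A| + |B|)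
      ≤ a * ((m3 + m) ^ (a - 1) * (ρ ^ (a - 1)) ^ j) * (m * ρ ^ j) := by
    have ha0 : (0:ℝ) ≤ a := by linarith
    have hb0 : (0:ℝ) ≤ |A| + |B| := by positivity
    have hb1 : (0:ℝ) ≤ (|C| + (|A| + |B|)) ^ (a - 1) := Real.rpow_nonneg (by positivity) _
    nlinarith [mul_le_mul h3 hm hb0 (by positivity : (0:ℝ) ≤ (m3 + m) ^ (a-1) * (ρ ^ (a-1)) ^ j)]
  have e2 : (ρ ^ (a - 1)) ^ j * ρ ^ j = (ρ ^ a) ^ j := by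
    rw [← mul_pow]
    congr 1
    rw [← Real.rpow_add_one hρ.ne']
    norm_num
  calc (|A| + |B|) ^ a + a * (|C| + (|A| + |B|)) ^ (a - 1) * (|A| + |B|)
      ≤ m ^ a * (ρ ^ a) ^ j + a * ((m3 + m) ^ (a - 1) * (ρ ^ (a - 1)) ^ j) * (m * ρ ^ j) :=
        add_le_add h1 h2
    _ = m ^ a * (ρ ^ a) ^ j + a * (m3 + m) ^ (a - 1) * m * ((ρ ^ (a - 1)) ^ j * ρ ^ j) := by ring
    _ = (m ^ a + a * (m3 + m) ^ (a - 1) * m) * (ρ ^ a) ^ j := by rw [e2]; ring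

lemma lin2 {x y : ℝ} (hx : |x| ≤ 1) (hy : |y| ≤ 1) (c d : ℝ) : |c * x + d * y| ≤ |c| + |d| := by
  calc |c * x + d * y| ≤ |c * x| + |d * y| := abs_add_le _ _
    _ = |c| * |x| + |d| * |y| := by rw [abs_mul, abs_mul]
    _ ≤ |c| * 1 + |d| * 1 := by
        have h1 : |c| * |x| ≤ |c| * 1 := mul_le_mul_of_nonneg_left hx (abs_nonneg c)
        have h2 : |d| * |y| ≤ |d| * 1 := mul_le_mul_of_nonneg_left hy (abs_nonneg d)
        linarith
    _ = |c| + |d| := by ring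


noncomputable def Fint (α a1 a2 a3 a4 l1 l2 : ℝ) (h j : ℕ) (s : Sphere2) : ℝ :=
  |l1 ^ h * A1 a1 a2 a3 a4 l1 l2 j s + l2 ^ h * B1 a1 a2 a3 a4 l1 l2 j s| ^ α
    + |C1 a1 a2 a3 a4 l1 l2 j s| ^ α
    - |C1 a1 a2 a3 a4 l1 l2 j s
        - (l1 ^ h * A1 a1 a2 a3 a4 l1 l2 j s + l2 ^ h * B1 a1 a2 a3 a4 l1 l2 j s)| ^ α

lemma CDneg_eq (Γ : Measure Sphere2) (α a1 a2 a3 a4 l1 l2 : ℝ) (h : ℕ) :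
    CDneg Γ α a1 a2 a3 a4 l1 l2 h = ∑' j : ℕ, ∫ s, Fint α a1 a2 a3 a4 l1 l2 h j s ∂Γ := rfl

theorem CD_neg_asymptotic_case_II
    (Γ : Measure Sphere2) [IsFiniteMeasure Γ]
    (α a1 a2 a3 a4 l1 l2 : ℝ) (hα1 : 1 < α) (hα2 : α < 2)
    (hl1 : l1 ^ 2 - (a1 + a4) * l1 + (a1 * a4 - a2 * a3) = 0)
    (hl2 : l2 ^ 2 - (a1 + a4) * l2 + (a1 * a4 - a2 * a3) = 0)
    (hne : l1 ≠ l2) (habs1 : |l1| < 1) (habs2 : |l2| < 1)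
    (hlt : |l1| < |l2|) :
    Tendsto (fun h : ℕ => CDneg Γ α a1 a2 a3 a4 l1 l2 h / l2 ^ h) atTop
      (𝓝 (α * D2 Γ α a1 a2 a3 a4 l1 l2)) := by
  classical
  haveI : BorelSpace Sphere2 := Subtype.borelSpace {s : ℝ × ℝ | s.1 ^ 2 + s.2 ^ 2 = 1}
  have hr2 : (0:ℝ) < |l2| := lt_of_le_of_lt (abs_nonneg l1) hlt
  have hl20 : l2 ≠ 0 := fun hc => by simp [hc] at hr2
  have hsub : l2 - l1 ≠ 0 := sub_ne_zero.mpr (Ne.symm hne)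
  have hD : (0:ℝ) < |l2 - l1| := abs_pos.mpr hsub
  have hs1 : ∀ s : Sphere2, |s.1.1| ≤ 1 := by
    intro s
    nlinarith [s.2, sq_abs s.1.1, sq_nonneg s.1.2, abs_nonneg s.1.1, sq_nonneg (|s.1.1| - 1)]
  have hs2 : ∀ s : Sphere2, |s.1.2| ≤ 1 := by
    intro s
    nlinarith [s.2, sq_abs s.1.2, sq_nonneg s.1.1, abs_nonneg s.1.2, sq_nonneg (|s.1.2| - 1)]
  -- constants
  set k1 : ℝ := (|l2 - a1| + |(-a2)|) / |l2 - l1| with hk1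
  set k2 : ℝ := (|a1 - l1| + |a2|) / |l2 - l1| with hk2
  set k3 : ℝ := ((|(-a3)| + |l2 - a4|) + (|a3| + |a4 - l1|)) / |l2 - l1| with hk3
  have hk30 : (0:ℝ) ≤ k3 := by rw [hk3]; positivity
  -- coefficient bounds
  have hA : ∀ (j : ℕ) (s : Sphere2), |A1 a1 a2 a3 a4 l1 l2 j s| ≤ k1 * |l2| ^ j := by
    intro j s
    have e : A1 a1 a2 a3 a4 l1 l2 j s
        = l1 ^ j * ((l2 - a1) * s.1.1 + (-a2) * s.1.2) / (l2 - l1) := by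
      simp only [A1]; ring
    rw [e, abs_div, abs_mul, abs_pow, div_le_iff₀ hD]
    have h1 : |(l2 - a1) * s.1.1 + (-a2) * s.1.2| ≤ |l2 - a1| + |(-a2)| :=
      lin2 (hs1 s) (hs2 s) _ _
    have h2 : |l1| ^ j ≤ |l2| ^ j := pow_le_pow_left₀ (abs_nonneg l1) hlt.le j
    have hk1e : k1 * |l2 - l1| = |l2 - a1| + |(-a2)| := by rw [hk1]; field_simp
    calc |l1| ^ j * |(l2 - a1) * s.1.1 + (-a2) * s.1.2|
        ≤ |l2| ^ j * (|l2 - a1| + |(-a2)|) :=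
          mul_le_mul h2 h1 (abs_nonneg _) (pow_nonneg (abs_nonneg _) _)
      _ = k1 * |l2| ^ j * |l2 - l1| := by rw [← hk1e]; ring
  have hB : ∀ (j : ℕ) (s : Sphere2), |B1 a1 a2 a3 a4 l1 l2 j s| ≤ k2 * |l2| ^ j := by
    intro j s
    have e : B1 a1 a2 a3 a4 l1 l2 j s
        = l2 ^ j * ((a1 - l1) * s.1.1 + a2 * s.1.2) / (l2 - l1) := by
      simp only [B1]; ring
    rw [e, abs_div, abs_mul, abs_pow, div_le_iff₀ hD]
    have h1 : |(a1 - l1) * s.1.1 + a2 * s.1.2| ≤ |a1 - l1| + |a2| :=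
      lin2 (hs1 s) (hs2 s) _ _
    have hk2e : k2 * |l2 - l1| = |a1 - l1| + |a2| := by rw [hk2]; field_simp
    calc |l2| ^ j * |(a1 - l1) * s.1.1 + a2 * s.1.2|
        ≤ |l2| ^ j * (|a1 - l1| + |a2|) :=
          mul_le_mul_of_nonneg_left h1 (pow_nonneg (abs_nonneg _) _)
      _ = k2 * |l2| ^ j * |l2 - l1| := by rw [← hk2e]; ring
  have hC : ∀ (j : ℕ) (s : Sphere2), |C1 a1 a2 a3 a4 l1 l2 j s| ≤ k3 * |l2| ^ j := by
    intro j s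
    have e : C1 a1 a2 a3 a4 l1 l2 j s
        = (l1 ^ j * ((-a3) * s.1.1 + (l2 - a4) * s.1.2)
            + l2 ^ j * (a3 * s.1.1 + (a4 - l1) * s.1.2)) / (l2 - l1) := by
      simp only [C1]; ring
    rw [e, abs_div, div_le_iff₀ hD]
    have h1 : |(-a3) * s.1.1 + (l2 - a4) * s.1.2| ≤ |(-a3)| + |l2 - a4| :=
      lin2 (hs1 s) (hs2 s) _ _
    have h2 : |a3 * s.1.1 + (a4 - l1) * s.1.2| ≤ |a3| + |a4 - l1| :=
      lin2 (hs1 s) (hs2 s) _ _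
    have hp : |l1| ^ j ≤ |l2| ^ j := pow_le_pow_left₀ (abs_nonneg l1) hlt.le j
    have hk3e : k3 * |l2 - l1| = (|(-a3)| + |l2 - a4|) + (|a3| + |a4 - l1|) := by
      rw [hk3]; field_simp
    have hpj : (0:ℝ) ≤ |l2| ^ j := pow_nonneg (abs_nonneg _) _
    calc |l1 ^ j * ((-a3) * s.1.1 + (l2 - a4) * s.1.2)
            + l2 ^ j * (a3 * s.1.1 + (a4 - l1) * s.1.2)|
        ≤ |l1 ^ j * ((-a3) * s.1.1 + (l2 - a4) * s.1.2)|
            + |l2 ^ j * (a3 * s.1.1 + (a4 - l1) * s.1.2)| := abs_add_le _ _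
      _ = |l1| ^ j * |(-a3) * s.1.1 + (l2 - a4) * s.1.2|
            + |l2| ^ j * |a3 * s.1.1 + (a4 - l1) * s.1.2| := by
          rw [abs_mul, abs_mul, abs_pow, abs_pow]
      _ ≤ |l2| ^ j * (|(-a3)| + |l2 - a4|) + |l2| ^ j * (|a3| + |a4 - l1|) := by
          have b1 : |l1| ^ j * |(-a3) * s.1.1 + (l2 - a4) * s.1.2|
              ≤ |l2| ^ j * (|(-a3)| + |l2 - a4|) :=
            mul_le_mul hp h1 (abs_nonneg _) hpj
          have b2 : |l2| ^ j * |a3 * s.1.1 + (a4 - l1) * s.1.2|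
              ≤ |l2| ^ j * (|a3| + |a4 - l1|) :=
            mul_le_mul_of_nonneg_left h2 hpj
          linarith
      _ = k3 * |l2| ^ j * |l2 - l1| := by
          have e2 : k3 * |l2| ^ j * |l2 - l1| = |l2| ^ j * (k3 * |l2 - l1|) := by ring
          rw [e2, hk3e]; ring
  have hAB : ∀ (j : ℕ) (s : Sphere2),
      |A1 a1 a2 a3 a4 l1 l2 j s| + |B1 a1 a2 a3 a4 l1 l2 j s| ≤ (k1 + k2) * |l2| ^ j := by
    intro j s
    have := hA j s
    have := hB j s
    nlinarith [pow_nonneg (abs_nonneg l2) j]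
  -- uniform pointwise bound
  have hptbound : ∀ (h j : ℕ) (s : Sphere2),
      |Fint α a1 a2 a3 a4 l1 l2 h j s / l2 ^ h|
        ≤ ((k1 + k2) ^ α + α * (k3 + (k1 + k2)) ^ (α - 1) * (k1 + k2)) * (|l2| ^ α) ^ j := by
    intro h j s
    refine le_trans (key_bound hα1 habs2 hlt (A1 a1 a2 a3 a4 l1 l2 j s)
      (B1 a1 a2 a3 a4 l1 l2 j s) (C1 a1 a2 a3 a4 l1 l2 j s) h) ?_
    exact bound_mono hα1 hr2 j (hAB j s) (hC j s) hk30
  -- continuity of integrands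
  have contA : ∀ j, Continuous fun s : Sphere2 => A1 a1 a2 a3 a4 l1 l2 j s := by
    intro j; unfold A1; fun_prop
  have contB : ∀ j, Continuous fun s : Sphere2 => B1 a1 a2 a3 a4 l1 l2 j s := by
    intro j; unfold B1; fun_prop
  have contC : ∀ j, Continuous fun s : Sphere2 => C1 a1 a2 a3 a4 l1 l2 j s := by
    intro j; unfold C1; fun_prop
  have hαpos : ∀ s : Sphere2, True := fun _ => trivial
  have contF : ∀ h j, Continuous fun s : Sphere2 => Fint α a1 a2 a3 a4 l1 l2 h j s / l2 ^ h := by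
    intro h j
    apply Continuous.div_const
    have c1 : Continuous fun s : Sphere2 =>
        l1 ^ h * A1 a1 a2 a3 a4 l1 l2 j s + l2 ^ h * B1 a1 a2 a3 a4 l1 l2 j s :=
      (continuous_const.mul (contA j)).add (continuous_const.mul (contB j))
    have hside : (0:ℝ) ≤ α := by linarith
    unfold Fint
    exact ((c1.abs.rpow_const fun s => Or.inr hside).add
      ((contC j).abs.rpow_const fun s => Or.inr hside)).sub
      (((contC j).sub c1).abs.rpow_const fun s => Or.inr hside)
  -- per-j dominated convergence
  have hjlim : ∀ j : ℕ, Tendsto (fun h : ℕ => ∫ s, Fint α a1 a2 a3 a4 l1 l2 h j s / l2 ^ h ∂Γ)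
      atTop (𝓝 (α * ∫ s, B1 a1 a2 a3 a4 l1 l2 j s * spow (C1 a1 a2 a3 a4 l1 l2 j s) (α - 1) ∂Γ)) := by
    intro j
    have hlimpt : ∀ s : Sphere2, Tendsto (fun h : ℕ => Fint α a1 a2 a3 a4 l1 l2 h j s / l2 ^ h)
        atTop (𝓝 (α * spow (C1 a1 a2 a3 a4 l1 l2 j s) (α - 1) * B1 a1 a2 a3 a4 l1 l2 j s)) :=
      fun s => key_tendsto hα1 habs2 hlt (A1 a1 a2 a3 a4 l1 l2 j s)
        (B1 a1 a2 a3 a4 l1 l2 j s) (C1 a1 a2 a3 a4 l1 l2 j s)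
    have hdct := MeasureTheory.tendsto_integral_of_dominated_convergence
      (μ := Γ)
      (F := fun h s => Fint α a1 a2 a3 a4 l1 l2 h j s / l2 ^ h)
      (f := fun s => α * spow (C1 a1 a2 a3 a4 l1 l2 j s) (α - 1) * B1 a1 a2 a3 a4 l1 l2 j s)
      (fun _ : Sphere2 => ((k1 + k2) ^ α + α * (k3 + (k1 + k2)) ^ (α - 1) * (k1 + k2)) * (|l2| ^ α) ^ j)
      (fun h => (contF h j).aestronglyMeasurable)
      (integrable_const _)
      (fun h => Filter.Eventually.of_forall fun s => by
        rw [Real.norm_eq_abs]; exact hptbound h j s)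
      (Filter.Eventually.of_forall hlimpt)
    have heqi : (∫ s, α * spow (C1 a1 a2 a3 a4 l1 l2 j s) (α - 1) * B1 a1 a2 a3 a4 l1 l2 j s ∂Γ)
        = α * ∫ s, B1 a1 a2 a3 a4 l1 l2 j s * spow (C1 a1 a2 a3 a4 l1 l2 j s) (α - 1) ∂Γ := by
      rw [← MeasureTheory.integral_const_mul]
      congr 1
      funext s
      ring
    rw [heqi] at hdct
    exact hdct
  -- summable bound
  have hgeo : Summable fun j : ℕ =>
      (((k1 + k2) ^ α + α * (k3 + (k1 + k2)) ^ (α - 1) * (k1 + k2)) * (|l2| ^ α) ^ j)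
        * (Γ Set.univ).toReal := by
    apply Summable.mul_right
    apply Summable.mul_left
    exact summable_geometric_of_lt_one (Real.rpow_nonneg (abs_nonneg l2) α)
      (Real.rpow_lt_one (abs_nonneg l2) habs2 (by linarith))
  -- bound on integrals
  have hball : ∀ (h j : ℕ), ‖∫ s, Fint α a1 a2 a3 a4 l1 l2 h j s / l2 ^ h ∂Γ‖
      ≤ (((k1 + k2) ^ α + α * (k3 + (k1 + k2)) ^ (α - 1) * (k1 + k2)) * (|l2| ^ α) ^ j)
          * (Γ Set.univ).toReal := by
    intro h j
    exact MeasureTheory.norm_integral_le_of_norm_le_const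
      (Filter.Eventually.of_forall fun s => by rw [Real.norm_eq_abs]; exact hptbound h j s)
  have main := tendsto_tsum_of_dominated_convergence
    (f := fun (h : ℕ) (j : ℕ) => ∫ s, Fint α a1 a2 a3 a4 l1 l2 h j s / l2 ^ h ∂Γ)
    (g := fun j : ℕ => α * ∫ s, B1 a1 a2 a3 a4 l1 l2 j s * spow (C1 a1 a2 a3 a4 l1 l2 j s) (α - 1) ∂Γ)
    hgeo hjlim (Filter.Eventually.of_forall fun h => fun j => hball h j)
  have hpt : (∑' j : ℕ, α * ∫ s, B1 a1 a2 a3 a4 l1 l2 j s * spow (C1 a1 a2 a3 a4 l1 l2 j s) (α - 1) ∂Γ)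
      = α * D2 Γ α a1 a2 a3 a4 l1 l2 := by
    rw [D2]
    exact tsum_mul_left
  rw [← hpt]
  refine main.congr fun h => ?_
  rw [CDneg_eq, ← tsum_div_const]
  exact tsum_congr fun j => MeasureTheory.integral_div _ _
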